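/- (Existence of canonical φ-coherent models, Gödel case.) Let K be a weighted G_n LC knowledge base and φ : ℝ → [0,1]. If K has a φ-coherent model, then K has a canonical φ-coherent model, i.e., a φ-coherent model I = (Δ, ·^I) such that for every φ-coherent model J = (Δ^J, ·^J) of K and every y ∈ Δ^J there is z ∈ Δ with B^I(z) = B^J(y) for all concept names B occurring in K. -/
import Mathlib


/-- Concepts of the boolean description logic LC. -/
inductive LC (NC : Type) : Type where
  | top : LC NC
  | bot : LC NC
  | nm : NC → LC NC
  | inter : LC NC → LC NC → LC NC
  | union : LC NC → LC NC → LC NC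
  | compl : LC NC → LC NC

/-- The concept names occurring in a concept. -/
def LC.names {NC : Type} : LC NC → Set NC
  | .top => ∅
  | .bot => ∅
  | .nm A => {A}
  | .inter C D => C.names ∪ D.names
  | .union C D => C.names ∪ D.names
  | .compl C => C.names

/-- The finite truth space C_n = {0, 1/n, ..., (n-1)/n, 1} ⊆ [0,1]. -/
def Cn (n : ℕ) : Set ℝ := {r : ℝ | ∃ i : ℕ, i ≤ n ∧ r = (i : ℝ) / (n : ℝ)}

/-- Gödel-semantics evaluation of LC concepts (with involutive negation). -/
def gval {NC Δ : Type} (v : NC → Δ → ℝ) : LC NC → Δ → ℝ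
  | .top => fun _ => 1
  | .bot => fun _ => 0
  | .nm A => v A
  | .inter C D => fun x => min (gval v C x) (gval v D x)
  | .union C D => fun x => max (gval v C x) (gval v D x)
  | .compl C => fun x => 1 - gval v C x

/-- Comparison operators θ ∈ {≥, ≤, >, <}. -/
inductive Ineq : Type where
  | ge : Ineq
  | le : Ineq
  | gt : Ineq
  | lt : Ineq

def Ineq.holds : Ineq → ℝ → ℝ → Prop
  | .ge, a, b => a ≥ b
  | .le, a, b => a ≤ b
  | .gt, a, b => a > b
  | .lt, a, b => a < b

/-- A weighted LC knowledge base over distinguished concepts C_1, …, C_k: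
a TBox of graded inclusions, an ABox of graded assertions, and for each
distinguished concept `Ci i` a finite set of weighted typicality inclusions
T(Ci i) ⊑ D i h with real weight w i h. -/
structure WKB (NC NI : Type) : Type where
  k : ℕ
  Ci : Fin k → LC NC
  H : Fin k → ℕ
  D : (i : Fin k) → Fin (H i) → LC NC
  w : (i : Fin k) → Fin (H i) → ℝ
  tbox : List (LC NC × LC NC × Ineq × ℝ)
  abox : List (LC NC × NI × Ineq × ℝ)
  tbox_bound : ∀ t ∈ tbox, t.2.2.2 ∈ Set.Icc (0 : ℝ) 1
  abox_bound : ∀ t ∈ abox, t.2.2.2 ∈ Set.Icc (0 : ℝ) 1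

/-- The concept names occurring in the knowledge base K. -/
def WKB.names {NC NI : Type} (K : WKB NC NI) : Set NC :=
  (⋃ i : Fin K.k, (K.Ci i).names) ∪
    (⋃ i : Fin K.k, ⋃ h : Fin (K.H i), (K.D i h).names) ∪
    (⋃ t ∈ K.tbox, t.1.names ∪ t.2.1.names) ∪
    (⋃ t ∈ K.abox, t.1.names)

/-- A finitely many-valued interpretation: concept names take values in C_n. -/
def IsInterp {NC Δ : Type} (n : ℕ) (val : NC → Δ → ℝ) : Prop :=
  ∀ A x, val A x ∈ Cn n

/-- Gödel implication: a ▷ b = 1 if a ≤ b, and b otherwise. -/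
noncomputable def gimp (a b : ℝ) : ℝ := if a ≤ b then 1 else b

/-- Satisfaction of the TBox: for every inclusion C ⊑ D θ α,
(inf_x C(x) ▷ D(x)) θ α holds. -/
def SatTBoxG {NC NI Δ : Type} (K : WKB NC NI) (val : NC → Δ → ℝ) : Prop :=
  ∀ t ∈ K.tbox,
    Ineq.holds t.2.2.1 (⨅ x : Δ, gimp (gval val t.1 x) (gval val t.2.1 x)) t.2.2.2

/-- Satisfaction of the ABox: for every assertion C(a) θ α, C(a^I) θ α holds. -/
def SatABoxG {NC NI Δ : Type} (K : WKB NC NI) (val : NC → Δ → ℝ) (ind : NI → Δ) : Prop :=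
  ∀ t ∈ K.abox, Ineq.holds t.2.2.1 (gval val t.1 (ind t.2.1)) t.2.2.2

/-- The weighted sum Σ_h w_{i,h} · D_{i,h}(x). -/
noncomputable def sumwG {NC NI Δ : Type} (K : WKB NC NI) (val : NC → Δ → ℝ)
    (i : Fin K.k) (x : Δ) : ℝ :=
  ∑ h : Fin (K.H i), K.w i h * gval val (K.D i h) x

/-- The weight W_i(x) ∈ ℝ ∪ {−∞} of x w.r.t. the distinguished concept C_i. -/
noncomputable def WgtG {NC NI Δ : Type} (K : WKB NC NI) (val : NC → Δ → ℝ)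
    (i : Fin K.k) (x : Δ) : EReal :=
  if 0 < gval val (K.Ci i) x then ((sumwG K val i x : ℝ) : EReal) else ⊥

/-- Faithful multipreference model: an interpretation satisfying the TBox and the
ABox such that x <_{C_i} y implies W_i(x) > W_i(y). -/
def IsFaithfulModelG {NC NI Δ : Type} (n : ℕ) (K : WKB NC NI)
    (val : NC → Δ → ℝ) (ind : NI → Δ) : Prop :=
  IsInterp n val ∧ SatTBoxG K val ∧ SatABoxG K val ind ∧
    ∀ (i : Fin K.k) (x y : Δ),
      gval val (K.Ci i) x > gval val (K.Ci i) y → WgtG K val i x > WgtG K val i y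

/-- Coherent multipreference model: an interpretation satisfying the TBox and the
ABox such that x <_{C_i} y iff W_i(x) > W_i(y). -/
def IsCoherentModelG {NC NI Δ : Type} (n : ℕ) (K : WKB NC NI)
    (val : NC → Δ → ℝ) (ind : NI → Δ) : Prop :=
  IsInterp n val ∧ SatTBoxG K val ∧ SatABoxG K val ind ∧
    ∀ (i : Fin K.k) (x y : Δ),
      (gval val (K.Ci i) x > gval val (K.Ci i) y ↔ WgtG K val i x > WgtG K val i y)

/-- φ-coherent multipreference model: an interpretation satisfying the TBox and
the ABox such that C_i(x) = φ(Σ_h w_{i,h} · D_{i,h}(x)) for all i and x. -/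
def IsPhiCoherentModelG {NC NI Δ : Type} (n : ℕ) (K : WKB NC NI) (φ : ℝ → ℝ)
    (val : NC → Δ → ℝ) (ind : NI → Δ) : Prop :=
  IsInterp n val ∧ SatTBoxG K val ∧ SatABoxG K val ind ∧
    ∀ (i : Fin K.k) (x : Δ), gval val (K.Ci i) x = φ (sumwG K val i x)

-- auxiliary lemmas, to be inserted above the theorem
lemma zero_mem_Cn (n : ℕ) : (0:ℝ) ∈ Cn n := ⟨0, Nat.zero_le n, by simp⟩

lemma one_mem_Cn {n : ℕ} (hn : 1 ≤ n) : (1:ℝ) ∈ Cn n := by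
  have : (n:ℝ) ≠ 0 := Nat.cast_ne_zero.mpr (Nat.one_le_iff_ne_zero.mp hn)
  exact ⟨n, le_rfl, by field_simp⟩

lemma Cn_subset_Icc {n : ℕ} (hn : 1 ≤ n) : Cn n ⊆ Set.Icc (0:ℝ) 1 := by
  rintro r ⟨i, hi, rfl⟩
  have hn' : (0:ℝ) < n := by exact_mod_cast hn
  constructor
  · positivity
  · rw [div_le_one hn']; exact_mod_cast hi

lemma min_mem_Cn {n : ℕ} {a b : ℝ} (ha : a ∈ Cn n) (hb : b ∈ Cn n) : min a b ∈ Cn n := by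
  rcases min_choice a b with h | h <;> rw [h] <;> assumption

lemma max_mem_Cn {n : ℕ} {a b : ℝ} (ha : a ∈ Cn n) (hb : b ∈ Cn n) : max a b ∈ Cn n := by
  rcases max_choice a b with h | h <;> rw [h] <;> assumption

lemma compl_mem_Cn {n : ℕ} (hn : 1 ≤ n) {r : ℝ} (hr : r ∈ Cn n) : 1 - r ∈ Cn n := by
  obtain ⟨i, hi, rfl⟩ := hr
  have hne : (n:ℝ) ≠ 0 := Nat.cast_ne_zero.mpr (Nat.one_le_iff_ne_zero.mp hn)
  refine ⟨n - i, Nat.sub_le n i, ?_⟩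
  rw [Nat.cast_sub hi]
  field_simp

lemma Cn_finite (n : ℕ) : (Cn n).Finite := by
  have hsub : Cn n ⊆ (fun i : ℕ => (i:ℝ)/n) '' (Set.Iic n) := by
    rintro r ⟨i, hi, rfl⟩; exact ⟨i, hi, rfl⟩
  exact ((Set.finite_Iic n).image _).subset hsub

/-- One-point Gödel evaluation. -/
def gval1 {NC : Type} (f : NC → ℝ) : LC NC → ℝ
  | .top => 1
  | .bot => 0
  | .nm A => f A
  | .inter C D => min (gval1 f C) (gval1 f D)
  | .union C D => max (gval1 f C) (gval1 f D)
  | .compl C => 1 - gval1 f C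

lemma gval_eq_gval1 {NC Δ : Type} (v : NC → Δ → ℝ) (C : LC NC) (x : Δ) :
    gval v C x = gval1 (fun A => v A x) C := by
  induction C <;> simp [gval, gval1, *]

lemma gval_point {NC Δ Δ' : Type} (v : NC → Δ → ℝ) (v' : NC → Δ' → ℝ) (x : Δ) (y : Δ')
    (h : ∀ A, v A x = v' A y) (C : LC NC) : gval v C x = gval v' C y := by
  rw [gval_eq_gval1, gval_eq_gval1]
  congr 1
  funext A
  exact h A

lemma gval1_mem_Cn {NC : Type} {n : ℕ} (hn : 1 ≤ n) {f : NC → ℝ} (hf : ∀ A, f A ∈ Cn n) :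
    ∀ C : LC NC, gval1 f C ∈ Cn n
  | .top => one_mem_Cn hn
  | .bot => zero_mem_Cn n
  | .nm A => hf A
  | .inter C D => min_mem_Cn (gval1_mem_Cn hn hf C) (gval1_mem_Cn hn hf D)
  | .union C D => max_mem_Cn (gval1_mem_Cn hn hf C) (gval1_mem_Cn hn hf D)
  | .compl C => compl_mem_Cn hn (gval1_mem_Cn hn hf C)

lemma gval_mem_Cn {NC Δ : Type} {n : ℕ} (hn : 1 ≤ n) {v : NC → Δ → ℝ} (hv : IsInterp n v)
    (C : LC NC) (x : Δ) : gval v C x ∈ Cn n := by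
  rw [gval_eq_gval1]; exact gval1_mem_Cn hn (fun A => hv A x) C

lemma gimp_mem_Cn {n : ℕ} (hn : 1 ≤ n) {a b : ℝ} (hb : b ∈ Cn n) : gimp a b ∈ Cn n := by
  unfold gimp; split
  · exact one_mem_Cn hn
  · exact hb

lemma gimp_nonneg {n : ℕ} (hn : 1 ≤ n) {a b : ℝ} (hb : b ∈ Cn n) : 0 ≤ gimp a b :=
  (Cn_subset_Icc hn (gimp_mem_Cn hn hb)).1

/-- If a weighted G_n LC knowledge base K has a φ-coherent model, then it has
a canonical φ-coherent model: a φ-coherent model I such that for every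
φ-coherent model J of K and every y in the domain of J there is z in the domain
of I agreeing with y on all concept names occurring in K. -/
theorem exists_canonical_phiCoherent_model_godel
    {NC NI : Type} (n : ℕ) (hn : 1 ≤ n) (K : WKB NC NI)
    (φ : ℝ → ℝ) (hφ : ∀ x : ℝ, φ x ∈ Set.Icc (0 : ℝ) 1)
    (h : ∃ (Δ : Type) (_ : Nonempty Δ) (val : NC → Δ → ℝ) (ind : NI → Δ),
        IsPhiCoherentModelG n K φ val ind) :
    ∃ (Δ : Type) (_ : Nonempty Δ) (val : NC → Δ → ℝ) (ind : NI → Δ),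
      IsPhiCoherentModelG n K φ val ind ∧
        ∀ (Δ' : Type) (_ : Nonempty Δ') (val' : NC → Δ' → ℝ) (ind' : NI → Δ'),
          IsPhiCoherentModelG n K φ val' ind' →
            ∀ y : Δ', ∃ z : Δ, ∀ B ∈ K.names, val B z = val' B y := by
    classical
  obtain ⟨Δ₀, hne₀, val₀, ind₀, hmod₀⟩ := h
  let S : Set (NC → ℝ) := {f | ∃ (Δ' : Type) (_ : Nonempty Δ') (val' : NC → Δ' → ℝ)
      (ind' : NI → Δ'), IsPhiCoherentModelG n K φ val' ind' ∧ ∃ y, ∀ A, f A = val' A y}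
  let Δc : Type := Δ₀ ⊕ ↥S
  haveI hnec : Nonempty Δc := ⟨Sum.inl hne₀.some⟩
  let val : NC → Δc → ℝ := fun A => Sum.elim (val₀ A) (fun f => f.1 A)
  have hpoint : ∀ z : Δc, ∃ (Δ' : Type) (_ : Nonempty Δ') (val' : NC → Δ' → ℝ)
      (ind' : NI → Δ'), IsPhiCoherentModelG n K φ val' ind' ∧ ∃ y, ∀ A, val A z = val' A y := by
    rintro (x | ⟨f, hf⟩)
    · exact ⟨Δ₀, hne₀, val₀, ind₀, hmod₀, x, fun A => rfl⟩
    · obtain ⟨Δ', hne', val', ind', hmod', y, hy⟩ := hf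
      exact ⟨Δ', hne', val', ind', hmod', y, fun A => hy A⟩
  have hCn : ∀ (z : Δc) (C : LC NC), gval val C z ∈ Cn n := by
    intro z C
    obtain ⟨Δ', hne', val', ind', hmod', y, hy⟩ := hpoint z
    rw [gval_point val val' z y hy C]
    exact gval_mem_Cn hn hmod'.1 C y
  have hinl : ∀ (x : Δ₀) (E : LC NC), gval val E (Sum.inl x) = gval val₀ E x :=
    fun x E => gval_point val val₀ (Sum.inl x) x (fun A => rfl) E
  have htbox : SatTBoxG K val := by
    rintro ⟨C, D, θ, α⟩ ht
    set g : Δc → ℝ := fun z => gimp (gval val C z) (gval val D z) with hg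
    have hgCn : ∀ z, g z ∈ Cn n := fun z => gimp_mem_Cn hn (hCn z D)
    have hgnn : ∀ z, 0 ≤ g z := fun z => (Cn_subset_Icc hn (hgCn z)).1
    have hB : BddBelow (Set.range g) := ⟨0, by rintro _ ⟨z, rfl⟩; exact hgnn z⟩
    have hper : ∀ z : Δc, ∃ β : ℝ, Ineq.holds θ β α ∧ β ≤ g z := by
      intro z
      obtain ⟨Δ', hne', val', ind', hmod', y, hy⟩ := hpoint z
      haveI := hne'
      refine ⟨⨅ x : Δ', gimp (gval val' C x) (gval val' D x), hmod'.2.1 (C, D, θ, α) ht, ?_⟩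
      have hB' : BddBelow (Set.range fun x : Δ' => gimp (gval val' C x) (gval val' D x)) := by
        refine ⟨0, ?_⟩
        rintro _ ⟨x, rfl⟩
        exact gimp_nonneg hn (gval_mem_Cn hn hmod'.1 D x)
      have hle := ciInf_le hB' y
      have hgz : g z = gimp (gval val' C y) (gval val' D y) := by
        show gimp (gval val C z) (gval val D z) = _
        rw [gval_point val val' z y hy C, gval_point val val' z y hy D]
      rw [hgz]
      exact hle
    have hsub : ∀ x : Δ₀, g (Sum.inl x) = gimp (gval val₀ C x) (gval val₀ D x) := by
      intro x
      show gimp (gval val C (Sum.inl x)) (gval val D (Sum.inl x)) = _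
      rw [hinl x C, hinl x D]
    have hbase := hmod₀.2.1 (C, D, θ, α) ht
    have hmono : (⨅ z : Δc, g z) ≤ ⨅ x : Δ₀, gimp (gval val₀ C x) (gval val₀ D x) := by
      haveI := hne₀
      refine le_ciInf fun x => ?_
      have := ciInf_le hB (Sum.inl x)
      rwa [hsub x] at this
    have hmem : (⨅ z : Δc, g z) ∈ Set.range g := by
      rw [iInf]
      exact (Set.range_nonempty g).csInf_mem
        (((Cn_finite n).subset (by rintro _ ⟨z, rfl⟩; exact hgCn z)))
    obtain ⟨z₀, hz₀⟩ := hmem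
    cases θ with
    | ge =>
      refine le_ciInf fun z => ?_
      obtain ⟨β, hβ, hβle⟩ := hper z
      exact le_trans hβ hβle
    | le => exact le_trans hmono hbase
    | gt =>
      rw [← hz₀]
      obtain ⟨β, hβ, hβle⟩ := hper z₀
      exact lt_of_lt_of_le hβ hβle
    | lt => exact lt_of_le_of_lt hmono hbase
  have habox : SatABoxG K val (fun a => Sum.inl (ind₀ a)) := by
    intro t ht
    have hb := hmod₀.2.2.1 t ht
    show Ineq.holds t.2.2.1 (gval val t.1 (Sum.inl (ind₀ t.2.1))) t.2.2.2
    rw [hinl]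
    exact hb
  refine ⟨Δc, hnec, val, fun a => Sum.inl (ind₀ a), ⟨fun A z => ?_, htbox, habox, ?_⟩, ?_⟩
  · exact hCn z (LC.nm A)
  · intro i z
    obtain ⟨Δ', hne', val', ind', hmod', y, hy⟩ := hpoint z
    have h1 : gval val (K.Ci i) z = gval val' (K.Ci i) y := gval_point _ _ _ _ hy _
    have h2 : sumwG K val i z = sumwG K val' i y := by
      unfold sumwG
      exact Finset.sum_congr rfl fun h _ => by rw [gval_point val val' z y hy]
    rw [h1, h2]
    exact hmod'.2.2.2 i y
  · intro Δ' hne' val' ind' hmod' y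
    exact ⟨Sum.inr ⟨fun A => val' A y, ⟨Δ', hne', val', ind', hmod', y, fun A => rfl⟩⟩,
      fun B _ => rfl⟩
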